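/- arXiv:1812.03739 — 3 statements merged into one kernel-verified Lean document; each statement's English description precedes it below -/
import Mathlib

section
/- Let A ∈ ℝ^{m×n} have columns of unit ℓ2-norm and mutual coherence μ. Then for every integer k ≥ 1 and every k-sparse vector y ∈ ℝⁿ, (1 − (k−1)μ)·‖y‖₂² ≤ ‖Ay‖₂² ≤ (1 + (k−1)μ)·‖y‖₂². -/
noncomputable def l2norm {ι : Type*} [Fintype ι] (v : ι → ℝ) : ℝ :=
  Real.sqrt (∑ i, (v i) ^ 2)

noncomputable def l1norm {ι : Type*} [Fintype ι] (v : ι → ℝ) : ℝ :=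
  ∑ i, |v i|

noncomputable def linfnorm {ι : Type*} [Fintype ι] (v : ι → ℝ) : ℝ :=
  ⨆ i, |v i|

/-- The mutual coherence of a matrix: the largest absolute inner product
between two distinct columns. -/
noncomputable def mutualCoherence {m n : ℕ} (A : Matrix (Fin m) (Fin n) ℝ) : ℝ :=
  ⨆ p : {p : Fin n × Fin n // p.1 ≠ p.2}, |∑ r, A r p.1.1 * A r p.1.2|

/-- `restrict v E` agrees with `v` on `E` and vanishes outside of `E`. -/
def restrict {n : ℕ} (v : Fin n → ℝ) (E : Finset (Fin n)) : Fin n → ℝ :=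
  fun i => if i ∈ E then v i else 0

/-- A vector is `k`-sparse if it has at most `k` nonzero entries. -/
def sparse {n : ℕ} (k : ℕ) (v : Fin n → ℝ) : Prop :=
  (Finset.univ.filter fun i => v i ≠ 0).card ≤ k

theorem stmt_0 {m n : ℕ} (A : Matrix (Fin m) (Fin n) ℝ)
    (hA : ∀ j, l2norm (fun i => A i j) = 1)
    (k : ℕ) (hk : 1 ≤ k) (y : Fin n → ℝ) (hy : sparse k y) :
    (1 - ((k : ℝ) - 1) * mutualCoherence A) * l2norm y ^ 2 ≤ l2norm (A.mulVec y) ^ 2 ∧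
      l2norm (A.mulVec y) ^ 2 ≤ (1 + ((k : ℝ) - 1) * mutualCoherence A) * l2norm y ^ 2 := by
  set μ := mutualCoherence A with hμdef
  have hμ0 : 0 ≤ μ := Real.iSup_nonneg fun p => abs_nonneg _
  have hμle : ∀ i j, i ≠ j → |∑ r, A r i * A r j| ≤ μ := by
    intro i j hij
    have hb : BddAbove (Set.range fun p : {p : Fin n × Fin n // p.1 ≠ p.2} =>
        |∑ r, A r p.1.1 * A r p.1.2|) := Set.Finite.bddAbove (Set.finite_range _)
    exact le_ciSup hb ⟨(i, j), hij⟩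
  have hG : ∀ j, ∑ r, A r j * A r j = 1 := by
    intro j
    have h := hA j
    have hnn : 0 ≤ ∑ r, (A r j) ^ 2 := Finset.sum_nonneg fun _ _ => sq_nonneg _
    have h2 : (∑ r, (A r j) ^ 2) = 1 := by
      have := congrArg (· ^ 2) h
      simpa [l2norm, Real.sq_sqrt hnn] using this
    simpa [sq] using h2
  set t := ∑ i, y i ^ 2 with ht
  have hty : l2norm y ^ 2 = t := by
    have hnn : 0 ≤ ∑ i, y i ^ 2 := Finset.sum_nonneg fun _ _ => sq_nonneg _
    simp [l2norm, Real.sq_sqrt hnn, ht]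
  have ht0 : 0 ≤ t := Finset.sum_nonneg fun _ _ => sq_nonneg _
  have hAy : l2norm (A.mulVec y) ^ 2 = ∑ r, (∑ i, A r i * y i) ^ 2 := by
    rw [l2norm, Real.sq_sqrt (Finset.sum_nonneg fun _ _ => sq_nonneg _)]
    simp [Matrix.mulVec, dotProduct]
  have expand : ∑ r, (∑ i, A r i * y i) ^ 2
      = ∑ i, ∑ j, y i * y j * ∑ r, A r i * A r j := by
    simp_rw [sq, Finset.sum_mul_sum, Finset.mul_sum]
    rw [Finset.sum_comm]
    refine Finset.sum_congr rfl fun i _ => ?_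
    rw [Finset.sum_comm]
    refine Finset.sum_congr rfl fun j _ => ?_
    exact Finset.sum_congr rfl fun r _ => by ring
  set E := ∑ i, ∑ j ∈ Finset.univ.erase i, y i * y j * ∑ r, A r i * A r j with hE
  have hsplit : l2norm (A.mulVec y) ^ 2 = t + E := by
    rw [hAy, expand, hE, ht]
    rw [← Finset.sum_add_distrib]
    refine Finset.sum_congr rfl fun i _ => ?_
    rw [← Finset.add_sum_erase (a := i) _ _ (Finset.mem_univ i)]
    rw [hG i]
    ring_nf
  -- bound |E|
  set L := ∑ i, |y i| with hL
  have hD : ∑ i, ∑ j ∈ Finset.univ.erase i, |y i| * |y j| = L ^ 2 - t := by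
    have : ∀ i, ∑ j ∈ Finset.univ.erase i, |y i| * |y j| = |y i| * L - y i ^ 2 := by
      intro i
      rw [← Finset.mul_sum, hL]
      rw [← Finset.add_sum_erase (a := i) _ (fun j => |y j|) (Finset.mem_univ i)]
      rw [mul_add]
      have : |y i| * |y i| = y i ^ 2 := by rw [← abs_mul, ← sq, abs_sq]
      rw [this]; ring
    simp_rw [this]
    rw [Finset.sum_sub_distrib, ← Finset.sum_mul, ← hL, ← ht, sq]
  have hL2 : L ^ 2 ≤ (k : ℝ) * t := by
    set T := Finset.univ.filter fun i => y i ≠ 0 with hT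
    have hLT : L = ∑ i ∈ T, |y i| := by
      rw [hL]
      refine (Finset.sum_subset (Finset.subset_univ T) ?_).symm
      intro i _ hi
      have : y i = 0 := by
        by_contra h
        exact hi (by simp [hT, h])
      simp [this]
    have htT : t = ∑ i ∈ T, y i ^ 2 := by
      rw [ht]
      refine (Finset.sum_subset (Finset.subset_univ T) ?_).symm
      intro i _ hi
      have : y i = 0 := by
        by_contra h
        exact hi (by simp [hT, h])
      simp [this]
    calc L ^ 2 = (∑ i ∈ T, |y i|) ^ 2 := by rw [hLT]
      _ ≤ T.card * ∑ i ∈ T, |y i| ^ 2 := sq_sum_le_card_mul_sum_sq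
      _ = T.card * t := by rw [htT]; simp [sq_abs]
      _ ≤ (k : ℝ) * t := by
          refine mul_le_mul_of_nonneg_right ?_ ht0
          exact_mod_cast hy
  have hEbound : |E| ≤ ((k : ℝ) - 1) * μ * t := by
    have h1 : |E| ≤ ∑ i, ∑ j ∈ Finset.univ.erase i, |y i| * |y j| * μ := by
      refine (Finset.abs_sum_le_sum_abs _ _).trans ?_
      refine Finset.sum_le_sum fun i _ => ?_
      refine (Finset.abs_sum_le_sum_abs _ _).trans ?_
      refine Finset.sum_le_sum fun j hj => ?_
      have hij : j ≠ i := Finset.ne_of_mem_erase hj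
      rw [abs_mul, abs_mul]
      exact mul_le_mul_of_nonneg_left (hμle i j (Ne.symm hij))
        (mul_nonneg (abs_nonneg _) (abs_nonneg _))
    have h2 : ∑ i, ∑ j ∈ Finset.univ.erase i, |y i| * |y j| * μ
        = (L ^ 2 - t) * μ := by
      simp_rw [← Finset.sum_mul]
      rw [hD]
    have h3 : (L ^ 2 - t) * μ ≤ ((k : ℝ) - 1) * μ * t := by
      have : L ^ 2 - t ≤ ((k : ℝ) - 1) * t := by linarith
      calc (L ^ 2 - t) * μ ≤ (((k : ℝ) - 1) * t) * μ :=
            mul_le_mul_of_nonneg_right this hμ0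
        _ = ((k : ℝ) - 1) * μ * t := by ring
    linarith [h1, h2 ▸ h1]
  have habs := abs_le.1 hEbound
  constructor
  · rw [hty, hsplit]; linarith [habs.1]
  · rw [hty, hsplit]; linarith [habs.2]
end

section
/- Let b = Ax + z with ‖z‖₂ ≤ ε, let λ > 0, and let x^♯ be a minimizer of u ↦ ‖u‖₁ + (1/(2λ))‖b − Au‖₂². Set h = x^♯ − x. Then for every subset E ⊂ {1,…,n}, ‖Ah‖₂² − 2ε‖Ah‖₂ ≤ 2λ(‖h_E‖₁ − ‖h_{E^c}‖₁ + 2‖x_{E^c}‖₁). -/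
/-! Comparing the objective at the minimizer `x♯ = x + h` with its value at `x` gives the
basic inequality `‖Ah‖₂² - 2⟨z, Ah⟩ ≤ 2λ(‖x‖₁ - ‖x♯‖₁)`. Cauchy–Schwarz bounds `⟨z, Ah⟩` by
`ε‖Ah‖₂`, and splitting `‖x‖₁ - ‖x + h‖₁` coordinatewise over `E` and `Eᶜ` (triangle inequality
on each side) bounds it by `‖h_E‖₁ - ‖h_{Eᶜ}‖₁ + 2‖x_{Eᶜ}‖₁`. -/

open Matrix

section L2

variable {ι : Type*} [Fintype ι]

lemma l2norm_nonneg (v : ι → ℝ) : 0 ≤ l2norm v :=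
  Real.sqrt_nonneg _

lemma l2norm_sq (v : ι → ℝ) : l2norm v ^ 2 = ∑ i, v i ^ 2 :=
  Real.sq_sqrt (by positivity)

lemma l2norm_sub_sq (u v : ι → ℝ) :
    l2norm (u - v) ^ 2 = l2norm u ^ 2 - 2 * ∑ i, u i * v i + l2norm v ^ 2 := by
  simp only [l2norm_sq, Pi.sub_apply, Finset.mul_sum, ← Finset.sum_sub_distrib,
    ← Finset.sum_add_distrib]
  exact Finset.sum_congr rfl fun i _ => by ring

lemma sum_mul_le_l2norm_mul_l2norm (u v : ι → ℝ) : ∑ i, u i * v i ≤ l2norm u * l2norm v :=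
  Real.sum_mul_le_sqrt_mul_sqrt Finset.univ u v

end L2

section L1

variable {n : ℕ}

lemma l1norm_restrict (v : Fin n → ℝ) (E : Finset (Fin n)) :
    l1norm (restrict v E) = ∑ i ∈ E, |v i| := by
  simp only [l1norm, restrict, apply_ite abs, abs_zero, Finset.sum_ite_mem,
    Finset.univ_inter]

lemma l1norm_eq_restrict_add_restrict_compl (v : Fin n → ℝ) (E : Finset (Fin n)) :
    l1norm v = l1norm (restrict v E) + l1norm (restrict v Eᶜ) := by
  rw [l1norm_restrict, l1norm_restrict, l1norm, Finset.sum_add_sum_compl]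

lemma l1norm_sub_l1norm_le (x y : Fin n → ℝ) (E : Finset (Fin n)) :
    l1norm x - l1norm y ≤
      l1norm (restrict (y - x) E) - l1norm (restrict (y - x) Eᶜ) + 2 * l1norm (restrict x Eᶜ) := by
  have on_E : ∑ i ∈ E, |x i| - ∑ i ∈ E, |y i| ≤ ∑ i ∈ E, |(y - x) i| := by
    rw [← Finset.sum_sub_distrib]
    exact Finset.sum_le_sum fun i _ => by
      simpa [abs_sub_comm] using abs_sub_abs_le_abs_sub (x i) (y i)
  have on_compl : ∑ i ∈ Eᶜ, |x i| - ∑ i ∈ Eᶜ, |y i| ≤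
      2 * ∑ i ∈ Eᶜ, |x i| - ∑ i ∈ Eᶜ, |(y - x) i| := by
    rw [Finset.mul_sum, ← Finset.sum_sub_distrib, ← Finset.sum_sub_distrib]
    exact Finset.sum_le_sum fun i _ => by rw [Pi.sub_apply]; linarith [abs_sub (y i) (x i)]
  rw [l1norm_eq_restrict_add_restrict_compl x E, l1norm_eq_restrict_add_restrict_compl y E]
  simp only [l1norm_restrict] at on_E on_compl ⊢
  linarith

end L1

lemma lasso_basic_inequality {ι κ : Type*} [Fintype ι] [Fintype κ] (A : Matrix κ ι ℝ)
    (x xs : ι → ℝ) (z b : κ → ℝ) (hb : b = A *ᵥ x + z) {lam : ℝ} (hlam : 0 < lam)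
    (hmin : l1norm xs + 1 / (2 * lam) * l2norm (b - A *ᵥ xs) ^ 2 ≤
      l1norm x + 1 / (2 * lam) * l2norm (b - A *ᵥ x) ^ 2) :
    l2norm (A *ᵥ (xs - x)) ^ 2 - 2 * ∑ i, z i * (A *ᵥ (xs - x)) i ≤
      2 * lam * (l1norm x - l1norm xs) := by
  have residual_x : b - A *ᵥ x = z := by rw [hb]; abel
  have residual_xs : b - A *ᵥ xs = z - A *ᵥ (xs - x) := by rw [hb, mulVec_sub]; abel
  rw [residual_x, residual_xs, l2norm_sub_sq] at hmin
  have key : 1 / (2 * lam) * (l2norm (A *ᵥ (xs - x)) ^ 2 - 2 * ∑ i, z i * (A *ᵥ (xs - x)) i) ≤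
      l1norm x - l1norm xs := by linarith
  rwa [one_div, inv_mul_le_iff₀ (by positivity)] at key

theorem stmt_1 {m n : ℕ} (A : Matrix (Fin m) (Fin n) ℝ)
    (x : Fin n → ℝ) (z : Fin m → ℝ) (b : Fin m → ℝ) (hb : b = A.mulVec x + z)
    (ε lam : ℝ) (hz : l2norm z ≤ ε) (hlam : 0 < lam)
    (xs : Fin n → ℝ)
    (hmin : ∀ u : Fin n → ℝ,
      l1norm xs + 1 / (2 * lam) * l2norm (b - A.mulVec xs) ^ 2 ≤
        l1norm u + 1 / (2 * lam) * l2norm (b - A.mulVec u) ^ 2)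
    (E : Finset (Fin n)) :
    l2norm (A.mulVec (xs - x)) ^ 2 - 2 * ε * l2norm (A.mulVec (xs - x)) ≤
      2 * lam * (l1norm (restrict (xs - x) E) - l1norm (restrict (xs - x) Eᶜ)
        + 2 * l1norm (restrict x Eᶜ)) := by
  have basic := lasso_basic_inequality A x xs z b hb hlam (hmin x)
  have noise : ∑ i, z i * (A *ᵥ (xs - x)) i ≤ ε * l2norm (A *ᵥ (xs - x)) :=
    (sum_mul_le_l2norm_mul_l2norm _ _).trans
      (mul_le_mul_of_nonneg_right hz (l2norm_nonneg _))
  have cone :=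
    mul_le_mul_of_nonneg_left (l1norm_sub_l1norm_le x xs E) (by positivity : 0 ≤ 2 * lam)
  linarith
end

section
/- Let A ∈ ℝ^{m×n} be a matrix, let b = Ax + z with ‖Aᵀz‖_∞ ≤ ε, let λ > 0, and let x^♯ be a minimizer of u ↦ ‖u‖₁ + (1/(2λ))‖Aᵀ(b − Au)‖_∞². Set h = x^♯ − x. Then for every subset E ⊂ {1,…,n}, ‖h_{E^c}‖₁ ≤ ‖h_E‖₁ + 2‖x_{E^c}‖₁ + (ε/λ)‖AᵀAh‖_∞. -/
noncomputable def alpha1 (k : ℕ) (μ : ℝ) : ℝ :=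
  Real.sqrt (1 + ((k : ℝ) - 1) * μ) / (1 - ((k : ℝ) - 1) * μ)

noncomputable def alpha2 (k : ℕ) (μ : ℝ) : ℝ :=
  Real.sqrt k * μ / (1 - ((k : ℝ) - 1) * μ)

noncomputable def fk (k : ℕ) (t : ℝ) : ℝ :=
  (k : ℝ) * t ^ 2 + 3 * Real.sqrt k * t + 3

noncomputable def gk (k : ℕ) (t : ℝ) : ℝ :=
  2 * (k : ℝ) * t ^ 2 + 4 * Real.sqrt k * t + 1

lemma linf_nonneg {ι : Type*} [Fintype ι] (v : ι → ℝ) : 0 ≤ linfnorm v := by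
  unfold linfnorm
  rcases isEmpty_or_nonempty ι with h | h
  · simp [Real.iSup_of_isEmpty]
  · exact le_trans (abs_nonneg (v (Classical.arbitrary ι)))
      (le_ciSup (f := fun i => |v i|) (Set.Finite.bddAbove (Set.finite_range _)) _)

lemma linf_le_i {ι : Type*} [Fintype ι] (v : ι → ℝ) (i : ι) : |v i| ≤ linfnorm v :=
  le_ciSup (f := fun i => |v i|) (Set.Finite.bddAbove (Set.finite_range _)) i

lemma linf_tri {ι : Type*} [Fintype ι] (v w : ι → ℝ) :
    linfnorm v ≤ linfnorm (v - w) + linfnorm w := by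
  rcases isEmpty_or_nonempty ι with h | h
  · simp only [linfnorm, Real.iSup_of_isEmpty]
    norm_num
  · apply ciSup_le
    intro i
    calc |v i| = |(v i - w i) + w i| := by ring_nf
    _ ≤ |v i - w i| + |w i| := abs_add_le _ _
    _ ≤ linfnorm (v - w) + linfnorm w := add_le_add (linf_le_i (v - w) i) (linf_le_i w i)

lemma l1_split {n : ℕ} (v : Fin n → ℝ) (E : Finset (Fin n)) :
    l1norm v = l1norm (restrict v E) + l1norm (restrict v Eᶜ) := by
  unfold l1norm restrict
  rw [← Finset.sum_add_distrib]
  apply Finset.sum_congr rfl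
  intro i _
  by_cases h : i ∈ E <;> simp [h]

lemma l1_sub_le {n : ℕ} (u w : Fin n → ℝ) :
    l1norm u - l1norm w ≤ l1norm (fun i => u i + w i) := by
  unfold l1norm
  rw [← Finset.sum_sub_distrib]
  apply Finset.sum_le_sum
  intro i _
  have := abs_add_le (u i + w i) (-w i)
  simp at this
  linarith [this, abs_neg (w i)]

theorem stmt_13 {m n : ℕ} (A : Matrix (Fin m) (Fin n) ℝ)
    (x : Fin n → ℝ) (z : Fin m → ℝ) (b : Fin m → ℝ) (hb : b = A.mulVec x + z)
    (ε lam : ℝ) (hz : linfnorm (A.transpose.mulVec z) ≤ ε) (hlam : 0 < lam)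
    (xs : Fin n → ℝ)
    (hmin : ∀ u : Fin n → ℝ,
      l1norm xs + 1 / (2 * lam) * linfnorm (A.transpose.mulVec (b - A.mulVec xs)) ^ 2 ≤
        l1norm u + 1 / (2 * lam) * linfnorm (A.transpose.mulVec (b - A.mulVec u)) ^ 2)
    (E : Finset (Fin n)) :
    l1norm (restrict (xs - x) Eᶜ) ≤
      l1norm (restrict (xs - x) E) + 2 * l1norm (restrict x Eᶜ)
        + ε / lam * linfnorm (A.transpose.mulVec (A.mulVec (xs - x))) := by
  set h : Fin n → ℝ := xs - x with hh
  set v : Fin n → ℝ := A.transpose.mulVec z with hv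
  set w : Fin n → ℝ := A.transpose.mulVec (A.mulVec h) with hw
  have hbxs : A.transpose.mulVec (b - A.mulVec xs) = v - w := by
    subst hb
    rw [hv, hw, hh, Matrix.mulVec_sub, Matrix.mulVec_sub, Matrix.mulVec_add, Matrix.mulVec_sub]
    abel
  have hbx : A.transpose.mulVec (b - A.mulVec x) = v := by
    subst hb
    simp [hv]
  have hmin' := hmin x
  rw [hbxs, hbx] at hmin'
  set a : ℝ := linfnorm v with ha
  set bb : ℝ := linfnorm (v - w) with hbb
  set c : ℝ := linfnorm w with hc
  have ha0 : 0 ≤ a := linf_nonneg v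
  have hb0 : 0 ≤ bb := linf_nonneg (v - w)
  have hc0 : 0 ≤ c := linf_nonneg w
  have htri : a ≤ bb + c := linf_tri v w
  have hεa : a ≤ ε := hz
  have key : a ^ 2 - bb ^ 2 ≤ 2 * ε * c := by
    rcases le_or_gt bb a with hba | hab
    · nlinarith
    · nlinarith
  -- l1 norm facts
  have hx_eq : l1norm x = l1norm (restrict x E) + l1norm (restrict x Eᶜ) := l1_split x E
  have hxs_eq : l1norm xs = l1norm (restrict xs E) + l1norm (restrict xs Eᶜ) := l1_split xs E
  have hE1 : l1norm (restrict x E) - l1norm (restrict h E) ≤ l1norm (restrict xs E) := by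
    have := l1_sub_le (restrict x E) (restrict h E)
    have heq : (fun i => restrict x E i + restrict h E i) = restrict xs E := by
      funext i
      by_cases hi : i ∈ E <;> simp [restrict, hi, hh]
    rw [heq] at this
    linarith
  have hE2 : l1norm (restrict h Eᶜ) - l1norm (restrict x Eᶜ) ≤ l1norm (restrict xs Eᶜ) := by
    have := l1_sub_le (restrict h Eᶜ) (restrict x Eᶜ)
    have heq : (fun i => restrict h Eᶜ i + restrict x Eᶜ i) = restrict xs Eᶜ := by
      funext i
      by_cases hi : i ∈ Eᶜ <;> simp [restrict, hi, hh]
    rw [heq] at this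
    linarith
  have hinv : (0:ℝ) < 1 / (2 * lam) := by positivity
  have key2 : 1 / (2 * lam) * (a ^ 2 - bb ^ 2) ≤ 1 / (2 * lam) * (2 * ε * c) :=
    mul_le_mul_of_nonneg_left key (le_of_lt hinv)
  have hdiv : 1 / (2 * lam) * (2 * ε * c) = ε / lam * c := by
    field_simp
  have expand : 1 / (2 * lam) * (a ^ 2 - bb ^ 2) =
      1 / (2 * lam) * a ^ 2 - 1 / (2 * lam) * bb ^ 2 := by ring
  linarith
end
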